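/- Let λ be a partition. The only partition μ satisfying K_{λμ} = 1 is μ = λ if and only if λ_i - λ_{i+1} ≤ 1 for all i (where λ_i = 0 for i > ℓ(λ)). -/

import Mathlib

/-- A partition encoded as a weakly decreasing, finitely supported function `ℕ → ℕ`
(0-indexed: `l 0` is the first part). -/
def IsPartition (l : ℕ → ℕ) : Prop :=
  Antitone l ∧ ∃ N, ∀ i, N ≤ i → l i = 0

/-- The size (sum of the parts). -/
noncomputable def psize (l : ℕ → ℕ) : ℕ := ∑ᶠ i, l i

/-- Dominance order: every partial sum of `l` is at least that of `m`. -/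
def Dominates (l m : ℕ → ℕ) : Prop :=
  ∀ k, ∑ i ∈ Finset.range k, m i ≤ ∑ i ∈ Finset.range k, l i

/-- `l` has exactly `h` (nonzero) parts. -/
def PartLength (l : ℕ → ℕ) (h : ℕ) : Prop :=
  (∀ i, i < h → 0 < l i) ∧ ∀ i, h ≤ i → l i = 0

/-- A semistandard Young tableau of shape `l`: positive entries in the cells
`(i, j)` with `j < l i`, zero outside, rows weakly increasing, columns strictly
increasing. -/
def IsSSYT (l : ℕ → ℕ) (T : ℕ → ℕ → ℕ) : Prop :=
  (∀ i j, j < l i → 1 ≤ T i j) ∧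
  (∀ i j, l i ≤ j → T i j = 0) ∧
  (∀ i j k, j ≤ k → k < l i → T i j ≤ T i k) ∧
  (∀ i i' j, i < i' → j < l i' → T i j < T i' j)

/-- The number of cells of `T` (inside shape `l`) with entry `m + 1`. -/
noncomputable def entryCount (l : ℕ → ℕ) (T : ℕ → ℕ → ℕ) (m : ℕ) : ℕ :=
  Set.ncard {p : ℕ × ℕ | p.2 < l p.1 ∧ T p.1 p.2 = m + 1}

/-- `T` has weight `w`: the entry `m + 1` occurs `w m` times. -/
def HasWeight (l : ℕ → ℕ) (T : ℕ → ℕ → ℕ) (w : ℕ → ℕ) : Prop :=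
  ∀ m, entryCount l T m = w m

/-- The Kostka number: the number of semistandard Young tableaux of shape `l`
and weight `w`. -/
noncomputable def kostka (l w : ℕ → ℕ) : ℕ :=
  Set.ncard {T : ℕ → ℕ → ℕ | IsSSYT l T ∧ HasWeight l T w}

/-!
If some gap `lam i - lam (i + 1)` is at least `2`, moving one box from row `i` to row `i + 1`
gives a weight `mu ≠ lam` with a single tableau: the superstandard one with the last entry of
row `i` raised to `i + 2`.

Conversely `K_{lam lam} = 1`, and when all gaps are at most `1`, a tableau of partition weight
that is not superstandard is never the only one of its weight. Take a defect (an entry `w + 2` not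
directly below a `w + 1`) with the largest entry; its leftmost copy can be lowered to `w + 1`.
As the weight has at least as many entries `w + 1` as `w + 2`, some `w + 1` in another row can be
raised to `w + 2`, and exchanging the two entries gives a second tableau of the same weight.
-/

open Function

variable {l : ℕ → ℕ} {T : ℕ → ℕ → ℕ}

def cellsWith (l : ℕ → ℕ) (T : ℕ → ℕ → ℕ) (m : ℕ) : Set (ℕ × ℕ) :=
  {p | p.2 < l p.1 ∧ T p.1 p.2 = m + 1}

lemma entryCount_eq_ncard (l : ℕ → ℕ) (T : ℕ → ℕ → ℕ) (m : ℕ) :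
    entryCount l T m = (cellsWith l T m).ncard := rfl

lemma ncard_image_prodMk_Iio (i n : ℕ) : (Prod.mk i '' Set.Iio n).ncard = n := by
  rw [Set.ncard_image_of_injective _ (Prod.mk_right_injective i), Set.ncard_Iio_nat]

lemma IsPartition.finite_cells (hl : IsPartition l) : {p : ℕ × ℕ | p.2 < l p.1}.Finite := by
  obtain ⟨N, hN⟩ := hl.2
  refine (Set.finite_Iio N |>.prod (Set.finite_Iio (l 0))).subset fun p (hp : p.2 < l p.1) => ?_
  refine ⟨Set.mem_Iio.2 ?_, hp.trans_le (hl.1 (Nat.zero_le p.1))⟩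
  by_contra! hi
  rw [hN p.1 hi] at hp
  exact Nat.not_lt_zero _ hp

lemma IsPartition.finite_cellsWith (hl : IsPartition l) (T : ℕ → ℕ → ℕ) (m : ℕ) :
    (cellsWith l T m).Finite :=
  hl.finite_cells.subset fun _ hp => hp.1

lemma IsSSYT.of_adjacent (hl : Antitone l) (hpos : ∀ i j, j < l i → 1 ≤ T i j)
    (hzero : ∀ i j, l i ≤ j → T i j = 0)
    (hrow : ∀ i j, j + 1 < l i → T i j ≤ T i (j + 1))
    (hcol : ∀ i j, j < l (i + 1) → T i j < T (i + 1) j) : IsSSYT l T := by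
  refine ⟨hpos, hzero, fun i j k hjk hk => ?_, fun i i' j hii' hj => ?_⟩
  · induction k, hjk using Nat.le_induction with
    | base => rfl
    | succ k hjk ih => exact (ih (by omega)).trans (hrow i k hk)
  · induction i', hii' using Nat.le_induction with
    | base => exact hcol i j hj
    | succ i' hii' ih => exact (ih (hj.trans_le (hl (Nat.le_succ i')))).trans (hcol i' j hj)

lemma IsSSYT.succ_le (hl : Antitone l) (hT : IsSSYT l T) {i j : ℕ} (hj : j < l i) :
    i + 1 ≤ T i j := by
  induction i generalizing j with
  | zero => exact hT.1 0 j hj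
  | succ i ih =>
    have := hT.2.2.2 i (i + 1) j (Nat.lt_succ_self i) hj
    have := ih (hj.trans_le (hl (Nat.le_succ i)))
    omega

lemma IsSSYT.ext {T' : ℕ → ℕ → ℕ} (hT : IsSSYT l T) (hT' : IsSSYT l T')
    (h : ∀ i j, j < l i → T i j = T' i j) : T = T' := by
  funext i j
  by_cases hj : j < l i
  · exact h i j hj
  · rw [hT.2.1 i j (not_lt.1 hj), hT'.2.1 i j (not_lt.1 hj)]

lemma kostka_eq_one_iff (l w : ℕ → ℕ) :
    kostka l w = 1 ↔ ∃ T, IsSSYT l T ∧ HasWeight l T w ∧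
      ∀ T', IsSSYT l T' → HasWeight l T' w → T' = T := by
  simp only [kostka, Set.ncard_eq_one, Set.eq_singleton_iff_unique_mem, Set.mem_ofPred_eq,
    and_imp, and_assoc]

def superstandard (l : ℕ → ℕ) : ℕ → ℕ → ℕ := fun i j => if j < l i then i + 1 else 0

lemma isSSYT_superstandard (hl : Antitone l) : IsSSYT l (superstandard l) := by
  refine .of_adjacent hl (fun i j hj => ?_) (fun i j hj => ?_) (fun i j hj => ?_) fun i j hj => ?_
  · simp [superstandard, hj]
  · simp [superstandard, not_lt.2 hj]
  · simp [superstandard, hj, show j < l i by omega]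
  · simp [superstandard, hj, hj.trans_le (hl (Nat.le_succ i))]

lemma cellsWith_superstandard (l : ℕ → ℕ) (m : ℕ) :
    cellsWith l (superstandard l) m = Prod.mk m '' Set.Iio (l m) := by
  ext ⟨i, j⟩
  simp only [cellsWith, superstandard, Set.mem_ofPred_eq, Set.mem_image, Set.mem_Iio,
    Prod.mk.injEq]
  constructor
  · rintro ⟨hj, hv⟩
    rw [if_pos hj] at hv
    obtain rfl : i = m := by omega
    exact ⟨j, hj, rfl, rfl⟩
  · rintro ⟨j, hj, rfl, rfl⟩
    simp [hj]

lemma hasWeight_superstandard (l : ℕ → ℕ) : HasWeight l (superstandard l) l := fun m => by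
  rw [entryCount_eq_ncard, cellsWith_superstandard, ncard_image_prodMk_Iio]

lemma IsSSYT.eq_superstandard (hl : Antitone l) (hT : IsSSYT l T)
    (h : ∀ i j, j < l i → T i j = i + 1) : T = superstandard l :=
  hT.ext (isSSYT_superstandard hl) fun i j hj => by simp [superstandard, hj, h i j hj]

/-- Entries in row `p` are at least `p + 1`, so by `hprev` all entries `k + 1` lie in row `k`. -/
lemma IsSSYT.row_eq_of_entryCount (hl : Antitone l) (hT : IsSSYT l T) {k : ℕ}
    (hcount : entryCount l T k = l k) (hprev : ∀ p < k, ∀ c < l p, T p c ≤ k) :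
    ∀ j < l k, T k j = k + 1 := by
  have hsub : cellsWith l T k ⊆ Prod.mk k '' Set.Iio (l k) := by
    rintro ⟨p, c⟩ ⟨hc, hv⟩
    dsimp only at hc hv
    have := hT.succ_le hl hc
    obtain hp | rfl : p < k ∨ p = k := by omega
    · have := hprev p hp c hc
      omega
    · exact ⟨c, hc, rfl⟩
  have heq := Set.eq_of_subset_of_ncard_le hsub
    (by rw [ncard_image_prodMk_Iio, ← entryCount_eq_ncard, hcount]) (Set.toFinite _)
  intro j hj
  have : (k, j) ∈ cellsWith l T k := heq ▸ ⟨j, hj, rfl⟩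
  exact this.2

lemma IsSSYT.rows_eq_of_entryCount (hl : Antitone l) (hT : IsSSYT l T) {k₀ k₁ : ℕ}
    (hprev : ∀ p < k₀, ∀ c < l p, T p c ≤ k₀)
    (hcount : ∀ k ∈ Set.Ico k₀ k₁, entryCount l T k = l k) :
    ∀ k ∈ Set.Ico k₀ k₁, ∀ j < l k, T k j = k + 1 := by
  intro k
  induction k using Nat.strong_induction_on with
  | _ k ih =>
    intro hk
    refine hT.row_eq_of_entryCount hl (hcount k hk) fun p hp c hc => ?_
    by_cases hp₀ : p < k₀
    · exact (hprev p hp₀ c hc).trans hk.1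
    · rw [ih p hp ⟨not_lt.1 hp₀, hp.trans hk.2⟩ c hc]
      exact hp

lemma kostka_self (hl : IsPartition l) : kostka l l = 1 := by
  refine (kostka_eq_one_iff l l).2 ⟨superstandard l, isSSYT_superstandard hl.1,
    hasWeight_superstandard l, fun T hT hw => hT.eq_superstandard hl.1 fun i j hj => ?_⟩
  exact hT.rows_eq_of_entryCount (k₀ := 0) (k₁ := i + 1) hl.1 (by simp)
    (fun k _ => hw k) i ⟨Nat.zero_le i, Nat.lt_succ_self i⟩ j hj

def swapCells (T : ℕ → ℕ → ℕ) (x y : ℕ × ℕ) : ℕ → ℕ → ℕ :=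
  fun i j => uncurry T (Equiv.swap x y (i, j))

lemma swapCells_apply (T : ℕ → ℕ → ℕ) (x y : ℕ × ℕ) (i j : ℕ) :
    swapCells T x y i j =
      if (i, j) = x then uncurry T y else if (i, j) = y then uncurry T x else T i j := by
  simp only [swapCells, Equiv.swap_apply_def]
  split_ifs <;> rfl

lemma entryCount_swapCells {x y : ℕ × ℕ} (hx : x.2 < l x.1) (hy : y.2 < l y.1) (m : ℕ) :
    entryCount l (swapCells T x y) m = entryCount l T m := by
  have hcells : cellsWith l (swapCells T x y) m = Equiv.swap x y ⁻¹' cellsWith l T m := by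
    ext p
    have : (Equiv.swap x y p).2 < l (Equiv.swap x y p).1 ↔ p.2 < l p.1 := by
      rw [Equiv.swap_apply_def]
      split_ifs <;> simp_all
    simp only [cellsWith, swapCells, Set.mem_preimage, Set.mem_ofPred_eq, this]
    rfl
  rw [entryCount_eq_ncard, entryCount_eq_ncard, hcells,
    Set.ncard_preimage_of_injective_subset_range (Equiv.injective _) (by simp)]

/-- The entry `T i j = w` can be raised to `w + 1`, resp. `T i j = w + 1` lowered to `w`, keeping
the rows weakly increasing and the columns strictly increasing. -/
def IsRaisable (l : ℕ → ℕ) (T : ℕ → ℕ → ℕ) (w i j : ℕ) : Prop :=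
  j < l i ∧ T i j = w ∧ (j + 1 < l i → w < T i (j + 1)) ∧ (j < l (i + 1) → w + 1 < T (i + 1) j)

def IsLowerable (l : ℕ → ℕ) (T : ℕ → ℕ → ℕ) (w i j : ℕ) : Prop :=
  j < l i ∧ T i j = w + 1 ∧ (0 < j → T i (j - 1) ≤ w) ∧ (0 < i → T (i - 1) j < w)

lemma IsSSYT.swapCells (hl : Antitone l) (hT : IsSSYT l T) {w p c i j : ℕ}
    (hx : IsRaisable l T w p c) (hy : IsLowerable l T w i j) (hpi : p ≠ i) :
    IsSSYT l (swapCells T (p, c) (i, j)) := by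
  obtain ⟨hxc, hxv, hxright, hxbelow⟩ := hx
  obtain ⟨hyc, hyv, hyleft, hyabove⟩ := hy
  have hw := hT.1 p c hxc
  refine .of_adjacent hl (fun a b hb => ?_) (fun a b hb => ?_) (fun a b hb => ?_)
    (fun a b hb => ?_)
  · have := hT.1 a b hb
    simp only [swapCells_apply, uncurry_apply_pair, Prod.mk.injEq]
    split_ifs <;> omega
  · have := hT.2.1 a b hb
    simp only [swapCells_apply, uncurry_apply_pair, Prod.mk.injEq]
    split_ifs <;> simp_all
  · have := hT.2.2.1 a b (b + 1) (Nat.le_succ b) hb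
    simp only [swapCells_apply, uncurry_apply_pair, Prod.mk.injEq]
    split_ifs <;> (try casesm* _ ∧ _) <;> subst_vars <;> simp_all <;> omega
  · have := hT.2.2.2 a (a + 1) b (Nat.lt_succ_self a) hb
    simp only [swapCells_apply, uncurry_apply_pair, Prod.mk.injEq]
    split_ifs <;> (try casesm* _ ∧ _) <;> subst_vars <;> simp_all <;> omega

lemma swapCells_ne {w p c i j : ℕ} (hx : T p c = w) (hy : T i j = w + 1) :
    swapCells T (p, c) (i, j) ≠ T := fun h => by
  have := congrFun (congrFun h p) c
  simp [swapCells_apply] at this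
  omega

lemma IsSSYT.exists_isRaisable_or_below (hT : IsSSYT l T) {w q d : ℕ} (hd : d < l q)
    (hv : T q d = w) :
    (∃ c, IsRaisable l T w q c) ∨ (d < l (q + 1) ∧ T (q + 1) d = w + 1) := by
  set P := fun e => e < l q ∧ T q e = w
  set c := Nat.findGreatest P (l q)
  have hc : c < l q ∧ T q c = w := Nat.findGreatest_spec (P := P) hd.le ⟨hd, hv⟩
  have hdc : d ≤ c := Nat.le_findGreatest (P := P) hd.le ⟨hd, hv⟩
  have hright : c + 1 < l q → w < T q (c + 1) := fun h => by
    have := hT.2.2.1 q c (c + 1) (Nat.le_succ c) h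
    have : ¬P (c + 1) := Nat.findGreatest_is_greatest (Nat.lt_succ_self c) h.le
    omega
  by_cases hbelow : c < l (q + 1) ∧ T (q + 1) c ≤ w + 1
  · obtain ⟨hcb, hle⟩ := hbelow
    have hdb : d < l (q + 1) := hdc.trans_lt hcb
    have := hT.2.2.2 q (q + 1) d (Nat.lt_succ_self q) hdb
    have := hT.2.2.1 (q + 1) d c hdc hcb
    exact .inr ⟨hdb, by omega⟩
  · exact .inl ⟨c, hc.1, hc.2, hright, fun h => by omega⟩

/-- If no `w + 1` were raisable, shifting one row down would inject the entries `w + 1` into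
the entries `w + 2` other than the one at `(i, j)`. -/
lemma IsSSYT.exists_isRaisable (hl : IsPartition l) (hT : IsSSYT l T) {w i j : ℕ}
    (hcount : entryCount l T (w + 1) ≤ entryCount l T w)
    (hj : j < l i) (hv : T i j = w + 2) (habove : 0 < i → T (i - 1) j < w + 1) :
    ∃ p c, IsRaisable l T (w + 1) p c := by
  by_contra! hnone
  have hmaps : ∀ z ∈ cellsWith l T w, (z.1 + 1, z.2) ∈ cellsWith l T (w + 1) \ {(i, j)} := by
    rintro ⟨q, d⟩ ⟨hd, hqd⟩
    dsimp only at hd hqd ⊢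
    obtain ⟨c, hc⟩ | ⟨hdb, hbelow⟩ := hT.exists_isRaisable_or_below hd hqd
    · exact absurd hc (hnone q c)
    · refine ⟨⟨hdb, hbelow⟩, fun h => ?_⟩
      obtain ⟨rfl, rfl⟩ := Prod.mk.inj h
      have := habove (Nat.succ_pos q)
      simp only [Nat.add_sub_cancel] at this
      omega
  have hle := Set.ncard_le_ncard_of_injOn _ hmaps
    (fun z _ z' _ h => by simpa [Prod.ext_iff] using h) (hl.finite_cellsWith T (w + 1)).sdiff
  have hmem : (i, j) ∈ cellsWith l T (w + 1) := ⟨hj, hv⟩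
  have := Set.ncard_sdiff_singleton_add_one hmem (hl.finite_cellsWith T (w + 1))
  rw [entryCount_eq_ncard, entryCount_eq_ncard] at hcount
  omega

def IsDefect (l : ℕ → ℕ) (T : ℕ → ℕ → ℕ) (a b : ℕ) : Prop :=
  b < l a ∧ 2 ≤ T a b ∧ (0 < a → T (a - 1) b + 1 ≠ T a b)

lemma IsSSYT.eq_superstandard_of_forall_not_isDefect (hl : Antitone l) (hT : IsSSYT l T)
    (h : ∀ a b, ¬IsDefect l T a b) : T = superstandard l := by
  refine hT.eq_superstandard hl fun a => ?_
  induction a with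
  | zero =>
    intro b hb
    have := hT.1 0 b hb
    by_contra hne
    exact h 0 b ⟨hb, by omega, by simp⟩
  | succ a ih =>
    intro b hb
    have := hT.succ_le hl hb
    have habove := ih b (hb.trans_le (hl (Nat.le_succ a)))
    by_contra hne
    exact h (a + 1) b ⟨hb, by omega, by simp [habove]; omega⟩

/-- The leftmost copy, in its row, of a defect's entry is lowerable. -/
lemma IsSSYT.exists_isLowerable (hl : Antitone l) (hT : IsSSYT l T) {w a b : ℕ}
    (hdef : IsDefect l T a b) (hv : T a b = w + 2) : ∃ j, IsLowerable l T (w + 1) a j := by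
  obtain ⟨hb, -, hnot⟩ := hdef
  have hex : ∃ j, T a j = w + 2 := ⟨b, hv⟩
  have hjb : Nat.find hex ≤ b := Nat.find_min' hex hv
  refine ⟨Nat.find hex, hjb.trans_lt hb, Nat.find_spec hex, fun hj => ?_, fun ha => ?_⟩
  · have := hT.2.2.1 a (Nat.find hex - 1) (Nat.find hex) (Nat.sub_le _ 1) (hjb.trans_lt hb)
    have := Nat.find_min hex (Nat.sub_lt hj one_pos)
    rw [Nat.find_spec hex] at *
    omega
  · have hb' : b < l (a - 1) := hb.trans_le (hl (Nat.sub_le a 1))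
    have := hT.2.2.1 (a - 1) (Nat.find hex) b hjb hb'
    have := hT.2.2.2 (a - 1) a b (Nat.sub_lt ha one_pos) hb
    have := hnot ha
    omega

/-- Swap a lowerable copy of the largest defective entry `w + 2` with a raisable `w + 1`, which
exists by counting. The two lie in different rows: otherwise the `w + 1` sits just left of the
`w + 2`, and since the row below is at most one cell shorter, the entry below that `w + 1` is a
larger defect. -/
lemma IsSSYT.exists_ne_of_isDefect (hl : IsPartition l) (hgap : ∀ i, l i - l (i + 1) ≤ 1)
    (hT : IsSSYT l T) (hcount : ∀ m, entryCount l T (m + 1) ≤ entryCount l T m) {a b : ℕ}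
    (hdef : IsDefect l T a b) :
    ∃ T', IsSSYT l T' ∧ (∀ m, entryCount l T' m = entryCount l T m) ∧ T' ≠ T := by
  obtain ⟨a₀, b₀, hdef₀, hmax⟩ :
      ∃ a₀ b₀, IsDefect l T a₀ b₀ ∧ ∀ a b, IsDefect l T a b → T a b ≤ T a₀ b₀ := by
    obtain ⟨z, hz, hmax⟩ := Set.exists_max_image {z : ℕ × ℕ | IsDefect l T z.1 z.2}
      (fun z => T z.1 z.2) (hl.finite_cells.subset fun _ h => h.1) ⟨(a, b), hdef⟩
    exact ⟨z.1, z.2, hz, fun a b h => hmax (a, b) h⟩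
  obtain ⟨w, hw⟩ : ∃ w, T a₀ b₀ = w + 2 := ⟨T a₀ b₀ - 2, by have := hdef₀.2.1; omega⟩
  obtain ⟨j, hy⟩ := hT.exists_isLowerable hl.1 hdef₀ hw
  obtain ⟨p, c, hx⟩ := hT.exists_isRaisable hl (hcount w) hy.1 hy.2.1 hy.2.2.2
  have hpa : p ≠ a₀ := by
    rintro rfl
    obtain ⟨hc, hcv, hright, hbelow⟩ := hx
    obtain ⟨hj, hjv, hleft, -⟩ := hy
    have hcj : c + 1 = j := by
      by_contra hne
      rcases Nat.lt_or_ge j (c + 1) with h | h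
      · have := hT.2.2.1 p j c (by omega) hc
        omega
      · have := hT.2.2.1 p (c + 1) (j - 1) (by omega) (by omega)
        have := hright (by omega)
        have := hleft (by omega)
        omega
    have hcb : c < l (p + 1) := by
      have := hgap p
      omega
    have := hbelow hcb
    have := hmax (p + 1) c ⟨hcb, by omega, by simp [hcv]; omega⟩
    omega
  exact ⟨_, hT.swapCells hl.1 hx hy hpa, entryCount_swapCells hx.1 hy.1,
    swapCells_ne hx.2.1 hy.2.1⟩

lemma eq_of_kostka_eq_one (hl : IsPartition l) (hgap : ∀ i, l i - l (i + 1) ≤ 1) {μ : ℕ → ℕ}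
    (hμ : Antitone μ) (hk : kostka l μ = 1) : μ = l := by
  obtain ⟨T, hT, hw, huniq⟩ := (kostka_eq_one_iff l μ).1 hk
  have hstd : T = superstandard l :=
    hT.eq_superstandard_of_forall_not_isDefect hl.1 fun a b hdef => by
      obtain ⟨T', hT', hw', hne⟩ := hT.exists_ne_of_isDefect hl hgap
        (fun m => by rw [hw, hw]; exact hμ (Nat.le_succ m)) hdef
      exact hne (huniq T' hT' fun m => (hw' m).trans (hw m))
  funext m
  rw [← hw m, hstd, hasWeight_superstandard l m]

def setCell (T : ℕ → ℕ → ℕ) (x : ℕ × ℕ) (v : ℕ) : ℕ → ℕ → ℕ :=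
  curry (update (uncurry T) x v)

lemma ncard_eq_ncard_sdiff_singleton_add {α : Type*} (S : Set α) (hS : S.Finite) (x : α)
    [Decidable (x ∈ S)] : S.ncard = (S \ {x}).ncard + if x ∈ S then 1 else 0 := by
  split_ifs with h
  · exact (Set.ncard_sdiff_singleton_add_one h hS).symm
  · rw [Set.sdiff_singleton_eq_self h, add_zero]

lemma entryCount_setCell (hl : IsPartition l) {x : ℕ × ℕ} (hx : x.2 < l x.1) (v m : ℕ) :
    entryCount l (setCell T x v) m + (if uncurry T x = m + 1 then 1 else 0) =
      entryCount l T m + if v = m + 1 then 1 else 0 := by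
  classical
  have hsdiff : cellsWith l (setCell T x v) m \ {x} = cellsWith l T m \ {x} := by
    ext p
    by_cases hp : p = x <;> simp [cellsWith, setCell, hp, uncurry_def]
  have hmem : ∀ U : ℕ → ℕ → ℕ, x ∈ cellsWith l U m ↔ uncurry U x = m + 1 := fun U => by
    simp [cellsWith, hx, uncurry_def]
  rw [entryCount_eq_ncard, entryCount_eq_ncard,
    ncard_eq_ncard_sdiff_singleton_add _ (hl.finite_cellsWith _ m) x,
    ncard_eq_ncard_sdiff_singleton_add _ (hl.finite_cellsWith _ m) x, hsdiff]
  simp only [hmem, setCell, uncurry_curry, update_self]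
  ring

lemma IsLowerSet.eq_Iio_ncard {s : Set ℕ} (h : IsLowerSet s) (hs : s.Finite) :
    s = Set.Iio s.ncard := by
  obtain rfl | ⟨a, rfl⟩ := h.eq_univ_or_Iio
  · exact absurd hs Set.infinite_univ
  · rw [Set.ncard_Iio_nat]

lemma IsSSYT.eq_iff_lt_ncard (hT : IsSSYT l T) {i v : ℕ} (hge : ∀ c < l i, v ≤ T i c) {c : ℕ}
    (hc : c < l i) : T i c = v ↔ c < {c | c < l i ∧ T i c = v}.ncard := by
  have hlower : IsLowerSet {c | c < l i ∧ T i c = v} := fun a b hba ha => by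
    have := hT.2.2.1 i b a hba ha.1
    have := hge b (hba.trans_lt ha.1)
    have := ha.2
    exact ⟨hba.trans_lt ha.1, by omega⟩
  rw [← Set.mem_Iio, ← hlower.eq_Iio_ncard ((Set.finite_Iio (l i)).subset fun _ h => h.1)]
  exact ⟨fun h => ⟨hc, h⟩, fun h => h.2⟩

lemma psize_eq_sum_range {N : ℕ} (hN : ∀ k, N ≤ k → l k = 0) :
    psize l = ∑ k ∈ Finset.range N, l k :=
  finsum_eq_sum_of_support_subset _ fun k hk => by
    by_contra h
    exact hk (hN k (by simpa using h))

def moveBox (l : ℕ → ℕ) (i : ℕ) : ℕ → ℕ :=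
  update (update l i (l i - 1)) (i + 1) (l (i + 1) + 1)

def moveBoxTableau (l : ℕ → ℕ) (i : ℕ) : ℕ → ℕ → ℕ :=
  setCell (superstandard l) (i, l i - 1) (i + 2)

section moveBox

variable {i : ℕ}

lemma moveBox_self : moveBox l i i = l i - 1 := by
  simp [moveBox]

lemma moveBox_succ : moveBox l i (i + 1) = l (i + 1) + 1 := by
  simp [moveBox]

lemma moveBox_of_ne {k : ℕ} (h₀ : k ≠ i) (h₁ : k ≠ i + 1) : moveBox l i k = l k := by
  simp [moveBox, h₀, h₁]

lemma moveBox_ne : moveBox l i ≠ l := fun h => by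
  have := congrFun h (i + 1)
  rw [moveBox_succ] at this
  omega

lemma psize_moveBox (hl : IsPartition l) (hi : 1 ≤ l i) : psize (moveBox l i) = psize l := by
  obtain ⟨N, hN⟩ := hl.2
  have hzero : ∀ k, max N (i + 2) ≤ k → l k = 0 := fun k hk => hN k (le_of_max_le_left hk)
  rw [psize_eq_sum_range hzero, psize_eq_sum_range (N := max N (i + 2)) fun k hk => by
    rw [moveBox_of_ne (by omega) (by omega), hzero k hk]]
  have hi₁ : i + 1 ∈ Finset.range (max N (i + 2)) := by simp
  have hi₀ : i ∈ Finset.range (max N (i + 2)) \ {i + 1} := by simp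
  rw [moveBox, Finset.sum_update_of_mem hi₁, Finset.sum_update_of_mem hi₀,
    Finset.sum_eq_sum_sdiff_singleton_add hi₁ l, Finset.sum_eq_sum_sdiff_singleton_add hi₀ l]
  omega

lemma isPartition_moveBox (hl : IsPartition l) (hgap : l (i + 1) + 2 ≤ l i) :
    IsPartition (moveBox l i) := by
  refine ⟨antitone_nat_of_succ_le fun k => ?_, ?_⟩
  · have := hl.1 (show k ≤ k + 1 by omega)
    rcases lt_trichotomy k i with h | rfl | h
    · rw [moveBox_of_ne (k := k) (by omega) (by omega)]
      rcases eq_or_ne (k + 1) i with rfl | h'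
      · rw [moveBox_self]
        omega
      · rwa [moveBox_of_ne h' (by omega)]
    · rw [moveBox_self, moveBox_succ]
      omega
    · rw [moveBox_of_ne (k := k + 1) (by omega) (by omega)]
      rcases eq_or_ne k (i + 1) with rfl | h'
      · rw [moveBox_succ]
        omega
      · rwa [moveBox_of_ne (by omega) h']
  · obtain ⟨N, hN⟩ := hl.2
    exact ⟨max N (i + 2), fun k hk => by
      rw [moveBox_of_ne (by omega) (by omega), hN k (le_of_max_le_left hk)]⟩

lemma isSSYT_moveBoxTableau (hl : Antitone l) (hi : l (i + 1) < l i) :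
    IsSSYT l (moveBoxTableau l i) := by
  refine .of_adjacent hl (fun a b hb => ?_) (fun a b hb => ?_) (fun a b hb => ?_)
    (fun a b hb => ?_)
  all_goals simp only [moveBoxTableau, setCell, curry_apply, update_apply, Prod.mk.injEq,
    superstandard, uncurry_apply_pair]
  · split_ifs <;> omega
  all_goals split_ifs <;> (try casesm* _ ∧ _) <;> subst_vars <;> omega

lemma hasWeight_moveBoxTableau (hl : IsPartition l) (hi : 1 ≤ l i) :
    HasWeight l (moveBoxTableau l i) (moveBox l i) := fun m => by
  have h := entryCount_setCell (T := superstandard l) hl (x := (i, l i - 1)) (by simp; omega)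
    (i + 2) m
  have hx : uncurry (superstandard l) (i, l i - 1) = i + 1 := by simp [superstandard]; omega
  rw [hx, hasWeight_superstandard l m, ← moveBoxTableau] at h
  rcases lt_trichotomy m i with h' | rfl | h'
  · rw [moveBox_of_ne (by omega) (by omega)]
    split_ifs at h <;> omega
  · rw [moveBox_self]
    split_ifs at h <;> omega
  · rcases eq_or_ne m (i + 1) with rfl | h''
    · rw [moveBox_succ]
      split_ifs at h <;> omega
    · rw [moveBox_of_ne (by omega) h'']
      split_ifs at h <;> omega

lemma IsSSYT.rows_lt_of_hasWeight_moveBox (hl : Antitone l) (hT : IsSSYT l T)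
    (hw : HasWeight l T (moveBox l i)) : ∀ k < i, ∀ j < l k, T k j = k + 1 := fun k hk =>
  hT.rows_eq_of_entryCount (k₀ := 0) (k₁ := i) hl (by simp)
    (fun k hk => by rw [hw, moveBox_of_ne (by grind) (by grind)]) k ⟨Nat.zero_le k, hk⟩

lemma IsSSYT.row_eq_iff_of_hasWeight_moveBox (hl : Antitone l) (hT : IsSSYT l T)
    (hw : HasWeight l T (moveBox l i)) {c : ℕ} (hc : c < l i) :
    T i c = i + 1 ↔ c < l i - 1 := by
  have hcells : cellsWith l T i = Prod.mk i '' {c | c < l i ∧ T i c = i + 1} := by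
    ext ⟨a, b⟩
    constructor
    · rintro ⟨hb, hv⟩
      dsimp only at hb hv
      obtain rfl : a = i := by
        have := hT.succ_le hl hb
        by_contra hne
        have := hT.rows_lt_of_hasWeight_moveBox hl hw a (by omega) b hb
        omega
      exact ⟨b, ⟨hb, hv⟩, rfl⟩
    · rintro ⟨c, hc, h⟩
      cases h
      exact hc
  rw [hT.eq_iff_lt_ncard (fun c hc => hT.succ_le hl hc) hc, ← moveBox_self, ← hw i,
    entryCount_eq_ncard, hcells, Set.ncard_image_of_injective _ (Prod.mk_right_injective i)]

/-- Entries `i + 2` can only occupy row `i + 1` and the last cell of row `i`, and there are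
`l (i + 1) + 1` of them. -/
lemma IsSSYT.cellsWith_succ_of_hasWeight_moveBox (hl : IsPartition l) (hT : IsSSYT l T)
    (hw : HasWeight l T (moveBox l i)) :
    cellsWith l T (i + 1) = insert (i, l i - 1) (Prod.mk (i + 1) '' Set.Iio (l (i + 1))) := by
  refine Set.eq_of_subset_of_ncard_le ?_ ?_ (Set.toFinite _)
  · rintro ⟨a, b⟩ ⟨hb, hv⟩
    dsimp only at hb hv
    have := hT.succ_le hl.1 hb
    obtain hai | rfl | hai := lt_trichotomy a i
    · have := hT.rows_lt_of_hasWeight_moveBox hl.1 hw a hai b hb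
      omega
    · have := (hT.row_eq_iff_of_hasWeight_moveBox hl.1 hw hb).not.1 (by omega)
      exact .inl (by simp; omega)
    · obtain rfl : a = i + 1 := by omega
      exact .inr ⟨b, hb, by simp⟩
  · rw [← entryCount_eq_ncard, hw, moveBox_succ, Set.ncard_insert_of_notMem (by simp),
      ncard_image_prodMk_Iio]

lemma IsSSYT.eq_moveBoxTableau (hl : IsPartition l) (hi : l (i + 1) < l i) (hT : IsSSYT l T)
    (hw : HasWeight l T (moveBox l i)) : T = moveBoxTableau l i := by
  have hbefore := hT.rows_lt_of_hasWeight_moveBox hl.1 hw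
  have hcells := hT.cellsWith_succ_of_hasWeight_moveBox hl hw
  have hcorner : T i (l i - 1) = i + 2 :=
    (hcells ▸ Set.mem_insert _ _ : (i, l i - 1) ∈ cellsWith l T (i + 1)).2
  have hnext : ∀ j < l (i + 1), T (i + 1) j = i + 2 := fun j hj =>
    (hcells ▸ Set.mem_insert_of_mem _ ⟨j, hj, rfl⟩ : (i + 1, j) ∈ cellsWith l T (i + 1)).2
  have hupto : ∀ p < i + 2, ∀ c < l p, T p c ≤ i + 2 := fun p hp c hc => by
    obtain hpi | rfl | rfl : p < i ∨ p = i ∨ p = i + 1 := by omega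
    · have := hbefore p hpi c hc
      omega
    · exact hcorner ▸ hT.2.2.1 p c (l p - 1) (by omega) (by omega)
    · exact (hnext c hc).le
  have hafter : ∀ k, i + 2 ≤ k → ∀ j < l k, T k j = k + 1 := fun k hk =>
    hT.rows_eq_of_entryCount (k₀ := i + 2) (k₁ := k + 1) hl.1 hupto
      (fun k hk => by rw [hw, moveBox_of_ne (by grind) (by grind)]) k ⟨hk, Nat.lt_succ_self k⟩
  refine hT.ext (isSSYT_moveBoxTableau hl.1 hi) fun a b hb => ?_
  simp only [moveBoxTableau, setCell, curry_apply, update_apply, Prod.mk.injEq,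
    superstandard, uncurry_apply_pair, if_pos hb]
  split_ifs with h
  · obtain ⟨rfl, rfl⟩ := h
    exact hcorner
  · obtain hai | rfl | hai := lt_trichotomy a i
    · exact hbefore a hai b hb
    · exact (hT.row_eq_iff_of_hasWeight_moveBox hl.1 hw hb).2 (by omega)
    · obtain rfl | hai := eq_or_lt_of_le (Nat.succ_le_of_lt hai)
      · exact hnext b hb
      · exact hafter a hai b hb

lemma kostka_moveBox (hl : IsPartition l) (hi : l (i + 1) < l i) : kostka l (moveBox l i) = 1 :=
  (kostka_eq_one_iff _ _).2 ⟨_, isSSYT_moveBoxTableau hl.1 hi,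
    hasWeight_moveBoxTableau hl (by omega), fun _ hT hw => hT.eq_moveBoxTableau hl hi hw⟩

end moveBox

theorem stmt9 (n : ℕ) (lam : ℕ → ℕ)
    (hlp : IsPartition lam) (hln : psize lam = n) :
    (∀ mu : ℕ → ℕ, IsPartition mu → psize mu = n →
        (kostka lam mu = 1 ↔ mu = lam)) ↔
      (∀ i, lam i - lam (i + 1) ≤ 1) := by
  refine ⟨fun H i => ?_, fun hgap mu hmu _ => ⟨eq_of_kostka_eq_one hlp hgap hmu.1, ?_⟩⟩
  · by_contra! hi
    have hgap : lam (i + 1) + 2 ≤ lam i := by omega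
    have hsize : psize (moveBox lam i) = n := by rw [psize_moveBox hlp (by omega), hln]
    exact moveBox_ne ((H _ (isPartition_moveBox hlp hgap) hsize).1
      (kostka_moveBox hlp (by omega)))
  · rintro rfl
    exact kostka_self hlp
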